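/- A tree T with a single centroid is uniquely determined (up to isomorphism fixing the edge labels) by the data consisting of θ_T({e_i}) for every edge e_i and θ_T({e_i, e_k}) for every pair of distinct edges e_i, e_k: any two single-centroid trees on the same labeled edge set with identical such data are isomorphic via an isomorphism matching the edge labels. -/

import Mathlib

/-!
Root both trees at their centroid `c` and, for an edge `e`, let `F e` be the set of vertices that
`e` cuts off from `c`. Since the centroid is unique, `2 |F e| < n`, so `|F e|` is the smaller part
of `θ({e})`. The sets `F e` form a laminar family, and `θ({e, e'})` is
`{|F e|, |F e'| - |F e|, n - |F e'|}` when `F e ⊂ F e'` and contains `|F e'|` otherwise, so the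
data determine which inclusions `F e ⊂ F e'` hold. This order determines the rooted tree: coding a
vertex `v` by the labels of the edges on the path from `c` to `v` is injective, and edge `i`
joins the codes `{j | F i ⊂ F j}` and `insert i {j | F i ⊂ F j}`.
-/

open SimpleGraph

/-- The multiset of sizes of the connected components of `G`. -/
noncomputable def componentSizes {V : Type*} [Finite V] (G : SimpleGraph V) : Multiset ℕ :=
  haveI : Fintype G.ConnectedComponent := Fintype.ofFinite _
  (Finset.univ : Finset G.ConnectedComponent).val.map fun c => c.supp.ncard

/-- `theta T S` is the partition (as a multiset) of `|V|` whose parts are the sizes of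
the connected components of `T` with the edges of `S` removed. -/
noncomputable def theta {V : Type*} [Finite V] (T : SimpleGraph V) (S : Set (Sym2 V)) :
    Multiset ℕ := componentSizes (T.deleteEdges S)

/-- The weight of a vertex `v` of a tree `T`: the maximal number of edges of a subtree
of `T` containing `v` as a leaf; equivalently, the maximal number of vertices of a
connected component of `T - v`. -/
noncomputable def weight {V : Type*} [Finite V] (T : SimpleGraph V) (v : V) : ℕ :=
  sSup (Set.range fun c : ((⊤ : T.Subgraph).deleteVerts {v}).coe.ConnectedComponent =>
    c.supp.ncard)

/-- The centroid of `T`: the set of vertices of minimal weight. -/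
def centroid {V : Type*} [Finite V] (T : SimpleGraph V) : Set V :=
  {v | ∀ u, weight T v ≤ weight T u}

namespace SimpleGraph

variable {V : Type*} {G : SimpleGraph V}

theorem Reachable.deleteEdges_or_forall_mem {x y : V} (h : G.Reachable x y) (e : Sym2 V) :
    (G.deleteEdges {e}).Reachable x y ∨ ∀ z ∈ e, G.Reachable x z := by
  classical
  obtain ⟨p⟩ := h
  by_cases hp : e ∈ p.edges
  · exact .inr fun z hz => ⟨p.takeUntil z (p.mem_support_of_mem_edges hp hz)⟩
  · exact .inl ⟨p.toDeleteEdges {e} fun e' he' hee' =>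
      hp (Set.mem_singleton_iff.mp hee' ▸ he')⟩

theorem Reachable.deleteIncidenceSet_of_not_reachable {x u w : V} (hu : ¬G.Reachable x u)
    (h : G.Reachable x w) :
    (G.deleteIncidenceSet u).Reachable x w := by
  classical
  obtain ⟨p⟩ := h
  exact ⟨p.toDeleteEdges _ fun e he hue =>
    hu ⟨p.takeUntil u (p.mem_support_of_mem_edges he hue.2)⟩⟩

theorem Reachable.exists_adj_reachable_deleteIncidenceSet {v w : V} (h : G.Reachable v w)
    (hne : v ≠ w) : ∃ y, G.Adj v y ∧ (G.deleteIncidenceSet v).Reachable y w := by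
  classical
  obtain ⟨p, hp⟩ := h.exists_isPath
  obtain ⟨y, hadj, q, rfl⟩ := p.exists_eq_cons_of_ne hne
  rw [Walk.cons_isPath_iff] at hp
  exact ⟨y, hadj, ⟨q.toDeleteEdges _ fun e he hve =>
    hp.2 (q.mem_support_of_mem_edges he hve.2)⟩⟩

theorem ne_of_reachable_deleteIncidenceSet {u x w : V}
    (h : (G.deleteIncidenceSet u).Reachable x w) (hx : x ≠ u) : w ≠ u := by
  rintro rfl
  obtain ⟨y, hadj, -⟩ := h.symm.exists_adj_reachable_deleteIncidenceSet hx.symm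
  exact (deleteIncidenceSet_adj.mp hadj).2.1 rfl

theorem deleteIncidenceSet_le_deleteEdges {u v : V} (h : G.Adj u v) :
    G.deleteIncidenceSet u ≤ G.deleteEdges {s(u, v)} :=
  deleteEdges_anti (Set.singleton_subset_iff.mpr ⟨h, Sym2.mem_mk_left u v⟩)

theorem deleteIncidenceSet_mono {H : SimpleGraph V} (h : G ≤ H) (u : V) :
    G.deleteIncidenceSet u ≤ H.deleteIncidenceSet u := fun a b hab => by
  rw [deleteIncidenceSet_adj] at hab ⊢
  exact ⟨h hab.1, hab.2⟩

theorem Connected.reachable_deleteEdges_or (hG : G.Connected) {u v : V} (huv : G.Adj u v)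
    (w : V) :
    (G.deleteEdges {s(u, v)}).Reachable u w ∨ (G.deleteEdges {s(u, v)}).Reachable v w := by
  rcases eq_or_ne u w with rfl | hne
  · exact .inl .rfl
  obtain ⟨y, hadj, hy⟩ := (hG.preconnected u w).exists_adj_reachable_deleteIncidenceSet hne
  have hyw := hy.mono (deleteIncidenceSet_le_deleteEdges huv)
  rcases eq_or_ne y v with rfl | hyv
  · exact .inr hyw
  · refine .inl (Adj.reachable ?_ |>.trans hyw)
    simpa [deleteEdges_adj, hadj, hadj.ne'] using hyv

theorem exists_iso_of_injective_of_map_edge_eq {V₁ V₂ ι X : Type*} {G₁ : SimpleGraph V₁}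
    {G₂ : SimpleGraph V₂} {A₁ : V₁ → X} {A₂ : V₂ → X} (hA₁ : Function.Injective A₁)
    (hA₂ : Function.Injective A₂) (hrange : Set.range A₁ = Set.range A₂)
    (f : ι ≃ G₁.edgeSet) (g : ι ≃ G₂.edgeSet)
    (hfg : ∀ i, Sym2.map A₁ (f i) = Sym2.map A₂ (g i)) :
    ∃ φ : G₁ ≃g G₂, ∀ i, Sym2.map φ (f i) = g i := by
  let φ : V₁ ≃ V₂ := ((Equiv.ofInjective A₁ hA₁).trans (Equiv.setCongr hrange)).trans
    (Equiv.ofInjective A₂ hA₂).symm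
  have hφ : A₂ ∘ φ = A₁ := funext fun v => by simp [φ, Equiv.apply_ofInjective_symm]
  have hmap : ∀ i, Sym2.map φ (f i) = g i := fun i =>
    Sym2.map.injective hA₂ (by rw [Sym2.map_map, hφ, hfg])
  refine ⟨⟨φ, fun {u v} => ?_⟩, hmap⟩
  rw [← mem_edgeSet, ← mem_edgeSet, ← Sym2.map_mk]
  constructor
  · intro h
    obtain ⟨i, hi⟩ := g.surjective ⟨_, h⟩
    have hi' : Sym2.map φ (f i) = Sym2.map φ s(u, v) := (hmap i).trans (congrArg Subtype.val hi)
    rw [← Sym2.map.injective φ.injective hi']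
    exact (f i).2
  · intro h
    obtain ⟨i, hi⟩ := f.surjective ⟨_, h⟩
    have hi' : (f i : Sym2 V₁) = s(u, v) := congrArg Subtype.val hi
    rw [← hi', hmap]
    exact (g i).2

theorem Preconnected.range_eq_insert_of_edges {X ι : Type*} (hG : G.Preconnected) (c : V)
    (A : V → X) (f : ι ≃ G.edgeSet) :
    Set.range A = insert (A c) {x | ∃ i, x ∈ Sym2.map A (f i)} := by
  ext x
  constructor
  · rintro ⟨v, rfl⟩
    by_cases hv : v = c
    · exact hv ▸ Set.mem_insert _ _
    obtain ⟨w, hvw, -⟩ := (hG v c).exists_adj_reachable_deleteIncidenceSet hv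
    refine Set.mem_insert_of_mem _ ⟨f.symm ⟨s(v, w), hvw⟩, ?_⟩
    simp
  · rintro (rfl | ⟨i, hx⟩)
    · exact ⟨c, rfl⟩
    · obtain ⟨v, -, rfl⟩ := Sym2.mem_map.mp hx
      exact ⟨v, rfl⟩

theorem componentSizes_eq_of_reachable_iff [Finite V] {α : Type*} [Fintype α] (κ : V → α)
    (hκ : Function.Surjective κ) (h : ∀ x y, G.Reachable x y ↔ κ x = κ y) :
    componentSizes G = Finset.univ.val.map fun a => (κ ⁻¹' {a}).ncard := by
  let _ : Fintype G.ConnectedComponent := Fintype.ofFinite _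
  let E : G.ConnectedComponent ≃ α := Equiv.ofBijective
    (ConnectedComponent.lift κ fun v w p _ => (h v w).mp ⟨p⟩)
    ⟨fun C D hCD => by
      induction C using ConnectedComponent.ind
      induction D using ConnectedComponent.ind
      exact ConnectedComponent.sound ((h _ _).mpr hCD),
    fun a => (hκ a).elim fun v hv => ⟨G.connectedComponentMk v, hv⟩⟩
  have hsupp : ∀ C : G.ConnectedComponent, C.supp = κ ⁻¹' {E C} := by
    intro C
    induction C using ConnectedComponent.ind with | h x => ?_
    ext v
    simp only [ConnectedComponent.mem_supp_iff, ConnectedComponent.eq, h]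
    rfl
  unfold componentSizes
  simp_rw [hsupp]
  conv_rhs => rw [← Multiset.map_univ_val_equiv E, Multiset.map_map]
  rfl

theorem componentSizes_eq_of_reachable_iff_mem [Finite V] {A : Set V} (hA : A.Nonempty)
    (hA' : Aᶜ.Nonempty) (h : ∀ x y, G.Reachable x y ↔ (x ∈ A ↔ y ∈ A)) :
    componentSizes G = {Nat.card V - A.ncard, A.ncard} := by
  classical
  let κ : V → Bool := fun x => x ∈ A
  rw [componentSizes_eq_of_reachable_iff κ ?_ fun x y => by simp [κ, h]]
  · have h1 : κ ⁻¹' {true} = A := by ext; simp [κ]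
    have h0 : κ ⁻¹' {false} = Aᶜ := by ext; simp [κ]
    simp only [Fintype.univ_bool, Finset.insert_val, Finset.singleton_val]
    simp [h0, h1]
    rw [Set.ncard_compl]
    exact Multiset.pair_comm _ _
  · rintro (_ | _)
    exacts [hA'.imp fun x hx => by simpa [κ] using hx, hA.imp fun x hx => by simpa [κ] using hx]

theorem componentSizes_eq_of_reachable_iff_mem_mem [Finite V] {A B : Set V}
    (hlam : A ⊆ B ∨ Disjoint A B) (hA : A.Nonempty) (hBA : (B \ A).Nonempty)
    (hAB : (A ∪ B)ᶜ.Nonempty)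
    (h : ∀ x y, G.Reachable x y ↔ (x ∈ A ↔ y ∈ A) ∧ (x ∈ B ↔ y ∈ B)) :
    componentSizes G = {A.ncard, (B \ A).ncard, (A ∪ B)ᶜ.ncard} := by
  classical
  let κ : V → Fin 3 := fun x => if x ∈ A then 0 else if x ∈ B then 1 else 2
  have hκ : ∀ x y, G.Reachable x y ↔ κ x = κ y := by
    intro x y
    rw [h]
    constructor
    · rintro ⟨hxyA, hxyB⟩
      simp only [κ, hxyA, hxyB]
    · intro hxy
      by_cases hxA : x ∈ A <;> by_cases hyA : y ∈ A
      · refine ⟨iff_of_true hxA hyA, ?_⟩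
        rcases hlam with hsub | hdisj
        · exact iff_of_true (hsub hxA) (hsub hyA)
        · exact iff_of_false (Set.disjoint_left.mp hdisj hxA) (Set.disjoint_left.mp hdisj hyA)
      all_goals by_cases hxB : x ∈ B <;> by_cases hyB : y ∈ B <;> simp_all [κ]
  rw [componentSizes_eq_of_reachable_iff κ ?_ hκ]
  · have h0 : κ ⁻¹' {0} = A := by
      ext x; by_cases x ∈ A <;> by_cases x ∈ B <;> simp [κ, *]
    have h1 : κ ⁻¹' {1} = B \ A := by
      ext x; by_cases x ∈ A <;> by_cases x ∈ B <;> simp [κ, *]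
    have h2 : κ ⁻¹' {2} = (A ∪ B)ᶜ := by
      ext x; by_cases x ∈ A <;> by_cases x ∈ B <;> simp [κ, *]
    simp only [Fin.univ_val_map, List.ofFn_succ, List.ofFn_zero]
    simp [h0, h1, h2]
    rfl
  · intro i
    fin_cases i
    · exact hA.imp fun x hx => by simp [κ, hx]
    · exact hBA.imp fun x hx => by simp [κ, hx.1, hx.2]
    · exact hAB.imp fun x hx => by simp_all [κ]

-- `G.deleteIncidenceSet u` stands for `G - u`, with `u` kept as an isolated vertex.
theorem reachable_coe_deleteVerts_iff {u : V} (x y : ((⊤ : G.Subgraph).deleteVerts {u}).verts) :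
    ((⊤ : G.Subgraph).deleteVerts {u}).coe.Reachable x y ↔
      (G.deleteIncidenceSet u).Reachable x y := by
  classical
  have hu : ∀ z : ((⊤ : G.Subgraph).deleteVerts {u}).verts, (z : V) ≠ u := fun z => by
    simpa using z.2.2
  constructor
  · exact fun h => h.map ⟨Subtype.val,
      fun {a b} (hab : ((⊤ : G.Subgraph).deleteVerts {u}).Adj a b) =>
        deleteIncidenceSet_adj.mpr ⟨hab.adj_sub, hu a, hu b⟩⟩
  · intro h
    let ψ : G.deleteIncidenceSet u →g ((⊤ : G.Subgraph).deleteVerts {u}).coe :=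
      ⟨fun w => if hw : w = u then x else ⟨w, by simp [hw]⟩, fun {a b} hab => by
        obtain ⟨hab, ha, hb⟩ := deleteIncidenceSet_adj.mp hab
        simpa [ha, hb] using hab⟩
    simpa [ψ, hu] using h.map ψ

theorem ncard_supp_deleteVerts (u : V) (y : ((⊤ : G.Subgraph).deleteVerts {u}).verts) :
    (((⊤ : G.Subgraph).deleteVerts {u}).coe.connectedComponentMk y).supp.ncard =
      {w | (G.deleteIncidenceSet u).Reachable y w}.ncard := by
  have hsupp : (((⊤ : G.Subgraph).deleteVerts {u}).coe.connectedComponentMk y).supp =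
      Subtype.val ⁻¹' {w | (G.deleteIncidenceSet u).Reachable y w} := by
    ext z
    simp [ConnectedComponent.mem_supp_iff, ConnectedComponent.eq, reachable_coe_deleteVerts_iff,
      reachable_comm]
  rw [hsupp, Set.ncard_preimage_of_injective_subset_range Subtype.val_injective]
  intro w hw
  exact ⟨⟨w, by simpa using ne_of_reachable_deleteIncidenceSet hw (by simpa using y.2.2)⟩, rfl⟩

theorem le_weight [Finite V] {u y : V} (hy : y ≠ u) :
    {w | (G.deleteIncidenceSet u).Reachable y w}.ncard ≤ weight G u := by
  rw [← ncard_supp_deleteVerts u ⟨y, by simpa using hy⟩]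
  exact le_csSup (Set.finite_range _).bddAbove ⟨_, rfl⟩

theorem weight_le [Finite V] {u : V} {m : ℕ}
    (h : ∀ y, y ≠ u → {w | (G.deleteIncidenceSet u).Reachable y w}.ncard ≤ m) :
    weight G u ≤ m := by
  refine csSup_le' ?_
  rintro _ ⟨C, rfl⟩
  induction C using ConnectedComponent.ind with | h y => ?_
  exact (ncard_supp_deleteVerts u y).trans_le <| h y (by simpa using y.2.2)

-- `F e` in the header: rooting `G` at `c`, the branch that hangs from the edge `e`.
def farSide (G : SimpleGraph V) (c : V) (e : Sym2 V) : Set V :=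
  {w | ¬(G.deleteEdges {e}).Reachable c w}

variable {c : V} {e e' : Sym2 V}

theorem root_notMem_farSide : c ∉ G.farSide c e := fun h => h .rfl

theorem mem_farSide_of_reachable {x y : V} (hx : x ∈ G.farSide c e)
    (h : (G.deleteEdges {e}).Reachable x y) : y ∈ G.farSide c e :=
  fun hy => hx (hy.trans h.symm)

theorem mem_farSide_iff_of_adj {x y : V} (hxy : G.Adj x y) (hne : s(x, y) ≠ e) :
    x ∈ G.farSide c e ↔ y ∈ G.farSide c e := by
  have hadj : (G.deleteEdges {e}).Adj x y := by simpa [deleteEdges_adj, hxy] using hne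
  exact ⟨fun h => mem_farSide_of_reachable h hadj.reachable,
    fun h => mem_farSide_of_reachable h hadj.reachable.symm⟩

theorem farSide_subset_farSide_of_mem {z : V} (hz : z ∈ e) (hz' : z ∈ G.farSide c e') :
    G.farSide c e ⊆ G.farSide c e' := by
  intro w hw hcw
  rcases hcw.deleteEdges_or_forall_mem e with h | h
  · rw [deleteEdges_deleteEdges] at h
    exact hw (h.mono (deleteEdges_anti Set.subset_union_right))
  · exact hz' (h z hz)

theorem IsTree.not_reachable_deleteEdges (hG : G.IsTree) {u v : V} (h : G.Adj u v) :
    ¬(G.deleteEdges {s(u, v)}).Reachable u v :=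
  isBridge_iff.mp (isAcyclic_iff_forall_adj_isBridge.mp hG.isAcyclic h)

theorem IsTree.mem_farSide_of_adj (hG : G.IsTree) {c v : V} (h : G.Adj c v) :
    v ∈ G.farSide c s(c, v) :=
  hG.not_reachable_deleteEdges h

theorem IsTree.exists_parent_child (hG : G.IsTree) (c : V) (he : e ∈ G.edgeSet) :
    ∃ p b, e = s(p, b) ∧ p ∉ G.farSide c e ∧ b ∈ G.farSide c e := by
  induction e using Sym2.ind with | _ u v => ?_
  have hbridge := hG.not_reachable_deleteEdges he
  rcases hG.connected.reachable_deleteEdges_or he c with h | h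
  · exact ⟨u, v, rfl, fun hu => hu h.symm, fun hv => hbridge (h.trans hv)⟩
  · exact ⟨v, u, Sym2.eq_swap, fun hv => hv h.symm, fun hu => hbridge (h.trans hu).symm⟩

theorem IsTree.reachable_deleteEdges_singleton_iff (hG : G.IsTree) (c : V) (he : e ∈ G.edgeSet)
    {x y : V} :
    (G.deleteEdges {e}).Reachable x y ↔ (x ∈ G.farSide c e ↔ y ∈ G.farSide c e) := by
  refine ⟨fun h => ⟨fun hx => mem_farSide_of_reachable hx h,
    fun hy => mem_farSide_of_reachable hy h.symm⟩, fun hxy => ?_⟩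
  obtain ⟨p, b, rfl, hp, hb⟩ := hG.exists_parent_child c he
  by_cases hx : x ∈ G.farSide c s(p, b)
  · have hside : ∀ w ∈ G.farSide c s(p, b), (G.deleteEdges {s(p, b)}).Reachable b w :=
      fun w hw => (hG.connected.reachable_deleteEdges_or he w).resolve_left
        fun h => hw ((not_not.mp hp).trans h)
    exact (hside x hx).symm.trans (hside y (hxy.mp hx))
  · exact (not_not.mp hx).symm.trans (not_not.mp (mt hxy.mpr hx))

theorem IsTree.reachable_deleteEdges_iff (hG : G.IsTree) (c : V) {S : Set (Sym2 V)}
    (hS : S ⊆ G.edgeSet) {x y : V} :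
    (G.deleteEdges S).Reachable x y ↔ ∀ e ∈ S, (x ∈ G.farSide c e ↔ y ∈ G.farSide c e) := by
  refine ⟨fun h e he => (hG.reachable_deleteEdges_singleton_iff c (hS he)).mp
    (h.mono (deleteEdges_anti (Set.singleton_subset_iff.mpr he))), fun h => ?_⟩
  obtain ⟨p, hp⟩ := (hG.connected.preconnected x y).exists_isPath
  refine ⟨p.toDeleteEdges S fun e hpe heS => ?_⟩
  obtain ⟨q, hq⟩ :=
    ((hG.reachable_deleteEdges_singleton_iff c (hS heS)).mpr (h e heS)).exists_isPath
  have hpq : (⟨p, hp⟩ : G.Path x y) = ⟨q.mapLe (deleteEdges_le _), hq.mapLe _⟩ :=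
    (hG.isAcyclic.subsingleton_path x y).elim _ _
  rw [Subtype.mk.injEq] at hpq
  subst hpq
  rw [Walk.edges_mapLe_eq_edges] at hpe
  simpa [edgeSet_deleteEdges] using q.edges_subset_edgeSet hpe

theorem IsTree.farSide_injOn (hG : G.IsTree) (c : V) : Set.InjOn (G.farSide c) G.edgeSet := by
  intro e he e' he' heq
  by_contra hne
  obtain ⟨p, b, rfl, hp, hb⟩ := hG.exists_parent_child c he'
  exact hp (heq ▸ (mem_farSide_iff_of_adj he' (Ne.symm hne)).mpr (heq ▸ hb))

theorem IsTree.eq_of_mem_farSide (hG : G.IsTree) (he : e ∈ G.edgeSet) {x y : V} (hx : x ∈ e)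
    (hxF : x ∈ G.farSide c e) (hy : y ∈ e) (hyF : y ∈ G.farSide c e) : x = y := by
  obtain ⟨p, b, rfl, hp, -⟩ := hG.exists_parent_child c he
  rcases Sym2.mem_iff.mp hx with rfl | rfl <;> rcases Sym2.mem_iff.mp hy with rfl | rfl <;>
    first | rfl | contradiction

theorem IsTree.exists_mem_farSide_of_ne (hG : G.IsTree) {v : V} (hv : v ≠ c) :
    ∃ e ∈ G.edgeSet, v ∈ e ∧ v ∈ G.farSide c e := by
  obtain ⟨y, hadj, hy⟩ :=
    (hG.connected.preconnected v c).exists_adj_reachable_deleteIncidenceSet hv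
  refine ⟨s(v, y), hadj, Sym2.mem_mk_left v y, fun hcv => ?_⟩
  exact hG.not_reachable_deleteEdges hadj
    (hy.mono (deleteIncidenceSet_le_deleteEdges hadj) |>.trans hcv).symm

theorem IsTree.farSide_laminar (hG : G.IsTree) (c : V) (he : e ∈ G.edgeSet)
    (he' : e' ∈ G.edgeSet) :
    G.farSide c e ⊆ G.farSide c e' ∨ G.farSide c e' ⊆ G.farSide c e ∨
      Disjoint (G.farSide c e) (G.farSide c e') := by
  obtain ⟨p, b, rfl, hp, hb⟩ := hG.exists_parent_child c he
  obtain ⟨p', b', rfl, hp', hb'⟩ := hG.exists_parent_child c he'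
  by_cases hbe' : b ∈ G.farSide c s(p', b')
  · exact .inl (farSide_subset_farSide_of_mem (Sym2.mem_mk_right p b) hbe')
  by_cases hb'e : b' ∈ G.farSide c s(p, b)
  · exact .inr (.inl (farSide_subset_farSide_of_mem (Sym2.mem_mk_right p' b') hb'e))
  refine .inr (.inr (Set.disjoint_left.mpr fun w hw hw' => ?_))
  have hbw := (hG.reachable_deleteEdges_singleton_iff c he).mpr (iff_of_true hb hw)
  rcases hbw.deleteEdges_or_forall_mem s(p', b') with h | h
  · rw [deleteEdges_deleteEdges] at h
    exact hw' ((not_not.mp hbe').trans (h.mono (deleteEdges_anti Set.subset_union_right)))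
  · exact hb'e (mem_farSide_of_reachable hb (h b' (Sym2.mem_mk_right p' b')))

theorem IsTree.exists_adj_farSide_subset (hG : G.IsTree) (c : V) (he : e ∈ G.edgeSet) :
    ∃ v, G.Adj c v ∧ G.farSide c e ⊆ G.farSide c s(c, v) := by
  obtain ⟨p, b, rfl, -, hb⟩ := hG.exists_parent_child c he
  obtain ⟨v, hcv, hvb⟩ := (hG.connected.preconnected c b).exists_adj_reachable_deleteIncidenceSet
    fun h => root_notMem_farSide (h ▸ hb)
  refine ⟨v, hcv, farSide_subset_farSide_of_mem (Sym2.mem_mk_right p b) ?_⟩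
  exact mem_farSide_of_reachable (hG.mem_farSide_of_adj hcv)
    (hvb.mono (deleteIncidenceSet_le_deleteEdges hcv))

section PathLabels

variable {ι : Type*}

-- The labels of the edges on the path from `c` to `v`.
def pathLabels (G : SimpleGraph V) (c : V) (f : ι ≃ G.edgeSet) (v : V) : Set ι :=
  {i | v ∈ G.farSide c (f i)}

theorem pathLabels_root (f : ι ≃ G.edgeSet) : G.pathLabels c f c = ∅ :=
  Set.eq_empty_of_forall_notMem fun _ => root_notMem_farSide

theorem IsTree.pathLabels_injective (hG : G.IsTree) (c : V) (f : ι ≃ G.edgeSet) :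
    Function.Injective (G.pathLabels c f) := by
  have key : ∀ {u v}, G.pathLabels c f u = G.pathLabels c f v → u ≠ c → u = v := by
    intro u v huv hu
    obtain ⟨e, he, hue, huF⟩ := hG.exists_mem_farSide_of_ne hu
    obtain ⟨i, rfl⟩ : ∃ i, (f i : Sym2 V) = e := ⟨f.symm ⟨e, he⟩, by simp⟩
    have hvF : v ∈ G.farSide c (f i) := show i ∈ G.pathLabels c f v from huv ▸ huF
    obtain ⟨e', he', hve', hvF'⟩ :=
      hG.exists_mem_farSide_of_ne fun h : v = c => root_notMem_farSide (h ▸ hvF)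
    obtain ⟨j, rfl⟩ : ∃ j, (f j : Sym2 V) = e' := ⟨f.symm ⟨e', he'⟩, by simp⟩
    have huF' : u ∈ G.farSide c (f j) := show j ∈ G.pathLabels c f u from huv ▸ hvF'
    have hij : (f i : Sym2 V) = f j := hG.farSide_injOn c he he' <|
      (farSide_subset_farSide_of_mem hue huF').antisymm (farSide_subset_farSide_of_mem hve' hvF)
    rw [← hij] at hve' hvF'
    exact hG.eq_of_mem_farSide he hue huF hve' hvF'
  intro u v huv
  by_cases hu : u = c
  · by_cases hv : v = c
    · rw [hu, hv]
    · exact (key huv.symm hv).symm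
  · exact key huv hu

theorem IsTree.map_pathLabels (hG : G.IsTree) (c : V) (f : ι ≃ G.edgeSet) (i : ι) :
    Sym2.map (G.pathLabels c f) (f i) =
      s({j | G.farSide c (f i) ⊂ G.farSide c (f j)},
        insert i {j | G.farSide c (f i) ⊂ G.farSide c (f j)}) := by
  obtain ⟨p, b, he, hp, hb⟩ := hG.exists_parent_child c (f i).2
  have hadj : G.Adj p b := by rw [← mem_edgeSet, ← he]; exact (f i).2
  have hlabel : Function.Injective fun j => (f j : Sym2 V) := Subtype.val_injective.comp f.injective
  have hpb : ∀ {j}, j ≠ i → (p ∈ G.farSide c (f j) ↔ b ∈ G.farSide c (f j)) := fun hji =>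
    mem_farSide_iff_of_adj hadj (he ▸ hlabel.ne hji.symm)
  have hP : G.pathLabels c f p = {j | G.farSide c (f i) ⊂ G.farSide c (f j)} := by
    ext j
    rcases eq_or_ne j i with rfl | hji
    · simpa [pathLabels] using hp
    · show p ∈ G.farSide c (f j) ↔ _
      rw [hpb hji]
      have hne := (hG.farSide_injOn c).ne (f i).2 (f j).2 (hlabel.ne hji.symm)
      exact ⟨fun h => (farSide_subset_farSide_of_mem (he ▸ Sym2.mem_mk_right p b) h).ssubset_of_ne
        hne, fun (h : G.farSide c (f i) ⊂ G.farSide c (f j)) => h.subset hb⟩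
  have hB : G.pathLabels c f b = insert i (G.pathLabels c f p) := by
    ext j
    rcases eq_or_ne j i with rfl | hji
    · simpa [pathLabels] using hb
    · simp [pathLabels, hji, hpb hji]
  rw [show Sym2.map (G.pathLabels c f) (f i) = s(G.pathLabels c f p, G.pathLabels c f b) by
    rw [he, Sym2.map_mk], hB, hP]

end PathLabels

theorem IsTree.exists_iso_of_farSide_ssubset_iff {V₁ V₂ ι : Type*} {T₁ : SimpleGraph V₁}
    {T₂ : SimpleGraph V₂} (h₁ : T₁.IsTree) (h₂ : T₂.IsTree) {c₁ : V₁} {c₂ : V₂}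
    (f : ι ≃ T₁.edgeSet) (g : ι ≃ T₂.edgeSet)
    (hord : ∀ i j, T₁.farSide c₁ (f i) ⊂ T₁.farSide c₁ (f j) ↔
      T₂.farSide c₂ (g i) ⊂ T₂.farSide c₂ (g j)) :
    ∃ φ : T₁ ≃g T₂, ∀ i, Sym2.map φ (f i) = g i := by
  have hmap : ∀ i,
      Sym2.map (T₁.pathLabels c₁ f) (f i) = Sym2.map (T₂.pathLabels c₂ g) (g i) := by
    intro i
    simp_rw [h₁.map_pathLabels, h₂.map_pathLabels, hord]
  refine exists_iso_of_injective_of_map_edge_eq (h₁.pathLabels_injective c₁ f)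
    (h₂.pathLabels_injective c₂ g) ?_ f g hmap
  rw [h₁.connected.preconnected.range_eq_insert_of_edges c₁ _ f,
    h₂.connected.preconnected.range_eq_insert_of_edges c₂ _ g, pathLabels_root, pathLabels_root]
  simp_rw [hmap]

section Finite

variable [Finite V]

theorem IsTree.theta_singleton (hG : G.IsTree) (c : V) (he : e ∈ G.edgeSet) :
    theta G {e} = {Nat.card V - (G.farSide c e).ncard, (G.farSide c e).ncard} := by
  obtain ⟨p, b, -, hp, hb⟩ := hG.exists_parent_child c he
  exact componentSizes_eq_of_reachable_iff_mem ⟨b, hb⟩ ⟨p, hp⟩ fun x y =>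
    hG.reachable_deleteEdges_singleton_iff c he

theorem IsTree.theta_pair (hG : G.IsTree) (c : V) (he : e ∈ G.edgeSet)
    (he' : e' ∈ G.edgeSet) (hne : e ≠ e')
    (hlam : G.farSide c e ⊆ G.farSide c e' ∨ Disjoint (G.farSide c e) (G.farSide c e')) :
    theta G {e, e'} = {(G.farSide c e).ncard, (G.farSide c e' \ G.farSide c e).ncard,
      (G.farSide c e ∪ G.farSide c e')ᶜ.ncard} := by
  obtain ⟨-, b, -, -, hb⟩ := hG.exists_parent_child c he
  obtain ⟨p', b', he'pb, -, hb'⟩ := hG.exists_parent_child c he'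
  have hb'e : b' ∉ G.farSide c e := fun h => by
    have hsub := farSide_subset_farSide_of_mem (he'pb ▸ Sym2.mem_mk_right p' b') h
    rcases hlam with hsub' | hdisj
    · exact hne (hG.farSide_injOn c he he' (hsub'.antisymm hsub))
    · exact Set.disjoint_left.mp hdisj h hb'
  refine componentSizes_eq_of_reachable_iff_mem_mem hlam ⟨b, hb⟩ ⟨b', hb', hb'e⟩
    ⟨c, by simp [root_notMem_farSide]⟩ fun x y => ?_
  rw [hG.reachable_deleteEdges_iff c (Set.insert_subset he (Set.singleton_subset_iff.mpr he'))]
  simp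

theorem IsTree.ncard_farSide_le_weight (hG : G.IsTree) {c v : V} (h : G.Adj c v) :
    (G.farSide c s(c, v)).ncard ≤ weight G c := by
  refine (Set.ncard_le_ncard fun w hw => ?_).trans (le_weight h.ne')
  have hvw := (hG.reachable_deleteEdges_singleton_iff c h).mpr
    (iff_of_true (hG.mem_farSide_of_adj h) hw)
  have hvc : ¬(G.deleteEdges {s(c, v)}).Reachable v c := fun hvc =>
    hG.mem_farSide_of_adj h hvc.symm
  exact (hvw.deleteIncidenceSet_of_not_reachable hvc).mono
    (deleteIncidenceSet_mono (deleteEdges_le _) c)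

theorem IsTree.weight_le_ncard_farSide (hG : G.IsTree) {c v : V} (h : G.Adj c v)
    (hbig : Nat.card V ≤ 2 * (G.farSide c s(c, v)).ncard) :
    weight G v ≤ (G.farSide c s(c, v)).ncard := by
  have hvF := hG.mem_farSide_of_adj h
  have hle : G.deleteIncidenceSet v ≤ G.deleteEdges {s(c, v)} := by
    rw [Sym2.eq_swap]; exact deleteIncidenceSet_le_deleteEdges h.symm
  refine weight_le fun y hyv => ?_
  by_cases hyc : (G.deleteIncidenceSet v).Reachable y c
  · calc {w | (G.deleteIncidenceSet v).Reachable y w}.ncard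
        ≤ (G.farSide c s(c, v))ᶜ.ncard :=
          Set.ncard_le_ncard fun w hw hwF => hwF ((hyc.symm.trans hw).mono hle)
      _ ≤ (G.farSide c s(c, v)).ncard := by rw [Set.ncard_compl]; omega
  · calc {w | (G.deleteIncidenceSet v).Reachable y w}.ncard
        ≤ (G.farSide c s(c, v)).ncard := Set.ncard_le_ncard fun w hw hcw => hyc <|
          hw.trans ((hcw.deleteIncidenceSet_of_not_reachable hvF).mono
            (deleteIncidenceSet_mono (deleteEdges_le _) v)).symm

-- Otherwise the neighbour `v` of `c` towards `e` would weigh no more than `c`, so it would lie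
-- in the centroid.
theorem IsTree.two_mul_ncard_farSide_lt (hG : G.IsTree) (hc : centroid G = {c})
    (he : e ∈ G.edgeSet) : 2 * (G.farSide c e).ncard < Nat.card V := by
  obtain ⟨v, hcv, hsub⟩ := hG.exists_adj_farSide_subset c he
  by_contra! hbig
  have hbig' : Nat.card V ≤ 2 * (G.farSide c s(c, v)).ncard :=
    hbig.trans (Nat.mul_le_mul_left 2 (Set.ncard_le_ncard hsub))
  have hvc := (hG.weight_le_ncard_farSide hcv hbig').trans (hG.ncard_farSide_le_weight hcv)
  have hv : v ∈ centroid G := fun u => hvc.trans ((hc ▸ Set.mem_singleton c : c ∈ centroid G) u)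
  rw [hc] at hv
  exact hcv.ne hv.symm

-- If `F e ⊂ F e'` the parts are `|F e|`, `|F e'| - |F e|` and `n - |F e'|`, none equal to
-- `|F e'|`; otherwise `|F e'|` is a part.
theorem IsTree.farSide_ssubset_iff_ncard_notMem_theta (hG : G.IsTree) (hc : centroid G = {c})
    (he : e ∈ G.edgeSet) (he' : e' ∈ G.edgeSet) (hne : e ≠ e') :
    G.farSide c e ⊂ G.farSide c e' ↔ (G.farSide c e').ncard ∉ theta G {e, e'} := by
  constructor
  · intro hss
    obtain ⟨-, b, -, -, hb⟩ := hG.exists_parent_child c he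
    rw [hG.theta_pair c he he' hne (.inl hss.subset), Set.union_eq_right.mpr hss.subset]
    have h1 := Set.ncard_lt_ncard hss
    have h2 := Set.ncard_lt_ncard (Set.sdiff_ssubset_left_iff.mpr ⟨b, hss.subset hb, hb⟩)
    have h3 := Set.ncard_compl (G.farSide c e')
    have h4 := hG.two_mul_ncard_farSide_lt hc he'
    simp only [Multiset.insert_eq_cons, Multiset.mem_cons, Multiset.mem_singleton]
    omega
  · intro hnot
    by_contra hss
    rcases hG.farSide_laminar c he he' with h | h | h
    · exact hss (h.ssubset_of_ne fun heq => hne (hG.farSide_injOn c he he' heq))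
    · rw [Set.pair_comm, hG.theta_pair c he' he hne.symm (.inl h)] at hnot
      simp at hnot
    · rw [hG.theta_pair c he he' hne (.inr h), h.sdiff_eq_right] at hnot
      simp at hnot

theorem IsTree.ncard_farSide_eq_of_theta_eq {W : Type*} [Finite W] {H : SimpleGraph W}
    (hG : G.IsTree) (hH : H.IsTree) {d : W} (hc : centroid G = {c}) (hd : centroid H = {d})
    {f : Sym2 W} (he : e ∈ G.edgeSet) (hf : f ∈ H.edgeSet) (h : theta G {e} = theta H {f}) :
    (G.farSide c e).ncard = (H.farSide d f).ncard := by
  rw [hG.theta_singleton c he, hH.theta_singleton d hf] at h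
  have h1 : (G.farSide c e).ncard ∈
      ({Nat.card W - (H.farSide d f).ncard, (H.farSide d f).ncard} : Multiset ℕ) := h ▸ by simp
  have h2 : (H.farSide d f).ncard ∈
      ({Nat.card V - (G.farSide c e).ncard, (G.farSide c e).ncard} : Multiset ℕ) := h ▸ by simp
  have h3 := hG.two_mul_ncard_farSide_lt hc he
  have h4 := hH.two_mul_ncard_farSide_lt hd hf
  simp only [Multiset.insert_eq_cons, Multiset.mem_cons, Multiset.mem_singleton] at h1 h2
  omega

end Finite

end SimpleGraph

/-- A single-centroid tree is determined, up to a label-matching isomorphism, by the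
`θ`-data of its singleton and 2-element edge sets: if two single-centroid trees with
edges labeled by the same index type `ι` have identical such data, then they are
isomorphic via an isomorphism matching the edge labels. -/
theorem tree_determined_by_theta_data {V₁ V₂ ι : Type*} [Fintype V₁] [Fintype V₂]
    (T₁ : SimpleGraph V₁) (T₂ : SimpleGraph V₂) (h₁ : T₁.IsTree) (h₂ : T₂.IsTree)
    (c₁ : V₁) (c₂ : V₂) (hc₁ : centroid T₁ = {c₁}) (hc₂ : centroid T₂ = {c₂})
    (f : ι ≃ T₁.edgeSet) (g : ι ≃ T₂.edgeSet)
    (hsingle : ∀ i : ι, theta T₁ {(f i : Sym2 V₁)} = theta T₂ {(g i : Sym2 V₂)})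
    (hpair : ∀ i j : ι, i ≠ j →
      theta T₁ {(f i : Sym2 V₁), (f j : Sym2 V₁)} =
        theta T₂ {(g i : Sym2 V₂), (g j : Sym2 V₂)}) :
    ∃ φ : T₁ ≃g T₂, ∀ i : ι, Sym2.map φ (f i : Sym2 V₁) = (g i : Sym2 V₂) := by
  refine h₁.exists_iso_of_farSide_ssubset_iff h₂ (c₁ := c₁) (c₂ := c₂) f g fun i j => ?_
  rcases eq_or_ne i j with rfl | hij
  · simp
  have hsize := h₁.ncard_farSide_eq_of_theta_eq h₂ hc₁ hc₂ (f j).2 (g j).2 (hsingle j)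
  rw [h₁.farSide_ssubset_iff_ncard_notMem_theta hc₁ (f i).2 (f j).2
      ((Subtype.val_injective.comp f.injective).ne hij),
    h₂.farSide_ssubset_iff_ncard_notMem_theta hc₂ (g i).2 (g j).2
      ((Subtype.val_injective.comp g.injective).ne hij),
    hpair i j hij, hsize]
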